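/- For every natural number n ≥ 1, the integral over [-1,1] of ((U_n(x) - U_n(0))/x)^2 · √(1-x^2) dx equals π·n when n is even, and equals π·(n+1) when n is odd, where U_k denotes the k-th Chebyshev polynomial of the second kind. -/
import Mathlib


open MeasureTheory Real

/-- The Chebyshev polynomials of the second kind, defined by
`U_{n+1}(x) = 2x U_n(x) - U_{n-1}(x)` with `U_0 = 1`, `U_1 = 2x`. -/
noncomputable def chebU : ℕ → ℝ → ℝ
  | 0, _ => 1
  | 1, x => 2 * x
  | n + 2, x => 2 * x * chebU (n + 1) x - chebU n x

lemma chebU_two (n : ℕ) (x : ℝ) :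
    chebU (n + 2) x = 2 * x * chebU (n + 1) x - chebU n x := rfl

lemma chebU_cont (n : ℕ) : Continuous (chebU n) := by
  induction n using Nat.twoStepInduction with
  | zero => show Continuous (fun _ => (1:ℝ)); continuity
  | one => show Continuous (fun x => 2 * x); continuity
  | more n ih1 ih2 =>
    have : chebU (n + 2) = fun x => 2 * x * chebU (n + 1) x - chebU n x := rfl
    rw [this]; exact ((continuous_const.mul continuous_id').mul ih2).sub ih1

lemma chebU_cos (n : ℕ) (θ : ℝ) : chebU n (cos θ) * sin θ = sin (((n : ℝ) + 1) * θ) := by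
  induction n using Nat.twoStepInduction with
  | zero => simp [chebU]
  | one =>
    show 2 * cos θ * sin θ = sin (((1 : ℕ) + 1 : ℝ) * θ)
    rw [show (((1:ℕ) : ℝ) + 1) * θ = θ + θ by push_cast; ring, sin_add]; ring
  | more n ih1 ih2 =>
    rw [chebU_two]
    have e1 : ((((n + 2 : ℕ)) : ℝ) + 1) * θ = ((((n+1:ℕ)):ℝ) + 1) * θ + θ := by push_cast; ring
    have e2 : (((n : ℕ) : ℝ) + 1) * θ = ((((n+1:ℕ)):ℝ) + 1) * θ - θ := by push_cast; ring
    rw [e1, sin_add]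
    have h1 := ih1
    rw [e2, sin_sub] at h1
    linear_combination 2 * cos θ * ih2 - h1

/-- The "filtered" polynomial `(U_n(x) - U_n(0)) / x` as a genuine polynomial family. -/
noncomputable def chS : ℕ → ℝ → ℝ
  | 0, _ => 0
  | 1, _ => 2
  | n + 2, x => 2 * chebU (n + 1) x - chS n x

lemma chS_two (n : ℕ) (x : ℝ) : chS (n + 2) x = 2 * chebU (n + 1) x - chS n x := rfl

lemma chS_cont (n : ℕ) : Continuous (chS n) := by
  induction n using Nat.twoStepInduction with
  | zero => show Continuous (fun _ => (0:ℝ)); continuity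
  | one => show Continuous (fun _ => (2:ℝ)); continuity
  | more n ih1 ih2 =>
    have : chS (n + 2) = fun x => 2 * chebU (n + 1) x - chS n x := rfl
    rw [this]; exact (continuous_const.mul (chebU_cont _)).sub ih1

lemma chebU_sub (n : ℕ) (x : ℝ) : chebU n x - chebU n 0 = x * chS n x := by
  induction n using Nat.twoStepInduction with
  | zero => simp [chebU, chS]
  | one => simp [chebU, chS]; ring
  | more n ih1 ih2 =>
    rw [chebU_two, chS_two, chebU_two n 0]
    nlinarith [ih1, ih2]

lemma integral_cos_int_mul (c : ℤ) (hc : c ≠ 0) :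
    ∫ θ in (0:ℝ)..π, cos ((c : ℝ) * θ) = 0 := by
  have hc' : (c : ℝ) ≠ 0 := Int.cast_ne_zero.mpr hc
  rw [intervalIntegral.integral_comp_mul_left Real.cos hc']
  simp [integral_cos, Real.sin_int_mul_pi]

lemma integral_sin_mul_sin (a b : ℕ) (ha : 1 ≤ a) (hb : 1 ≤ b) :
    ∫ θ in (0:ℝ)..π, sin ((a:ℝ) * θ) * sin ((b:ℝ) * θ)
      = if a = b then π / 2 else 0 := by
  have key : ∀ θ : ℝ, sin ((a:ℝ) * θ) * sin ((b:ℝ) * θ)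
      = (cos ((((a:ℤ) - b : ℤ) : ℝ) * θ) - cos ((((a:ℤ) + b : ℤ) : ℝ) * θ)) / 2 := by
    intro θ
    push_cast
    rw [show ((a:ℝ) - b) * θ = (a:ℝ)*θ - (b:ℝ)*θ by ring,
      show ((a:ℝ) + b) * θ = (a:ℝ)*θ + (b:ℝ)*θ by ring, cos_sub, cos_add]
    ring
  simp only [key]
  rw [intervalIntegral.integral_div, intervalIntegral.integral_sub
    (by apply Continuous.intervalIntegrable; continuity)
    (by apply Continuous.intervalIntegrable; continuity)]
  rw [integral_cos_int_mul ((a:ℤ) + b) (by omega)]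
  by_cases h : a = b
  · subst h
    simp only [sub_self, Int.cast_zero, zero_mul, Real.cos_zero, if_pos rfl]
    simp
  · rw [integral_cos_int_mul ((a:ℤ) - b) (by omega), if_neg h]
    ring

lemma integral_sub_cos (g : ℝ → ℝ) (hg : Continuous g) :
    ∫ x in (-1:ℝ)..1, g x = ∫ θ in (0:ℝ)..π, sin θ * g (cos θ) := by
  have h := intervalIntegral.integral_comp_smul_deriv
    (f := Real.cos) (f' := fun θ => -Real.sin θ) (g := g) (a := 0) (b := π)
    (fun x _ => (Real.hasDerivAt_cos x)) (Continuous.continuousOn (by continuity)) hg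
  simp only [smul_eq_mul, Function.comp] at h
  rw [Real.cos_zero, Real.cos_pi] at h
  have h3 : ∫ x in (1:ℝ)..(-1:ℝ), g x = -∫ x in (-1:ℝ)..1, g x :=
    intervalIntegral.integral_symm _ _
  rw [h3] at h
  have h2 : ∫ θ in (0:ℝ)..π, -sin θ * g (cos θ) = -∫ θ in (0:ℝ)..π, sin θ * g (cos θ) := by
    rw [← intervalIntegral.integral_neg]; congr 1; ext θ; ring
  rw [h2] at h
  linarith [h]

lemma chebU_orth (i j : ℕ) :
    ∫ x in (-1:ℝ)..1, chebU i x * chebU j x * Real.sqrt (1 - x ^ 2)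
      = if i = j then π / 2 else 0 := by
  have hcont : Continuous (fun x : ℝ => chebU i x * chebU j x * Real.sqrt (1 - x ^ 2)) := by
    exact ((chebU_cont i).mul (chebU_cont j)).mul
      (Real.continuous_sqrt.comp (by continuity))
  rw [integral_sub_cos _ hcont]
  have congr1 : ∫ θ in (0:ℝ)..π,
        sin θ * (chebU i (cos θ) * chebU j (cos θ) * Real.sqrt (1 - cos θ ^ 2))
      = ∫ θ in (0:ℝ)..π, sin (((i+1:ℕ):ℝ) * θ) * sin (((j+1:ℕ):ℝ) * θ) := by
    apply intervalIntegral.integral_congr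
    intro θ hθ
    rw [Set.uIcc_of_le Real.pi_nonneg] at hθ
    have hs : Real.sqrt (1 - cos θ ^ 2) = sin θ := by
      rw [show (1:ℝ) - cos θ ^ 2 = sin θ ^ 2 by nlinarith [sin_sq_add_cos_sq θ]]
      exact Real.sqrt_sq (Real.sin_nonneg_of_nonneg_of_le_pi hθ.1 hθ.2)
    have e1 : (((i+1:ℕ)):ℝ) = (i:ℝ) + 1 := by push_cast; ring
    have e2 : (((j+1:ℕ)):ℝ) = (j:ℝ) + 1 := by push_cast; ring
    simp only [e1, e2]
    rw [← chebU_cos, ← chebU_cos, hs]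
    ring
  rw [congr1, integral_sin_mul_sin (i+1) (j+1) (by omega) (by omega)]
  simp

lemma sqrt_cont : Continuous (fun x : ℝ => Real.sqrt (1 - x ^ 2)) :=
  Real.continuous_sqrt.comp (by continuity)

lemma chS_orth (n m : ℕ) (h : n ≤ m) :
    ∫ x in (-1:ℝ)..1, chebU m x * chS n x * Real.sqrt (1 - x ^ 2) = 0 := by
  induction n using Nat.twoStepInduction generalizing m with
  | zero => simp [chS]
  | one =>
    have : ∀ x : ℝ, chebU m x * chS 1 x * Real.sqrt (1 - x ^ 2)
        = 2 * (chebU m x * chebU 0 x * Real.sqrt (1 - x ^ 2)) := by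
      intro x; simp [chS, chebU]; ring
    simp only [this]
    rw [intervalIntegral.integral_const_mul, chebU_orth, if_neg (by omega)]
    ring
  | more n ih1 ih2 =>
    have key : ∀ x : ℝ, chebU m x * chS (n+2) x * Real.sqrt (1 - x ^ 2)
        = 2 * (chebU m x * chebU (n+1) x * Real.sqrt (1 - x ^ 2))
          - chebU m x * chS n x * Real.sqrt (1 - x ^ 2) := by
      intro x; rw [chS_two]; ring
    simp only [key]
    rw [intervalIntegral.integral_sub, intervalIntegral.integral_const_mul,
      chebU_orth, if_neg (by omega), ih1 m (by omega)]
    · ring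
    · apply Continuous.intervalIntegrable
      exact continuous_const.mul (((chebU_cont m).mul (chebU_cont (n+1))).mul sqrt_cont)
    · apply Continuous.intervalIntegrable
      exact ((chebU_cont m).mul (chS_cont n)).mul sqrt_cont

lemma chS_sq_integral (n : ℕ) :
    ∫ x in (-1:ℝ)..1, (chS n x) ^ 2 * Real.sqrt (1 - x ^ 2)
      = π * ((n + n % 2 : ℕ) : ℝ) := by
  induction n using Nat.twoStepInduction with
  | zero => simp [chS]
  | one =>
    have : ∀ x : ℝ, (chS 1 x) ^ 2 * Real.sqrt (1 - x ^ 2)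
        = 4 * (chebU 0 x * chebU 0 x * Real.sqrt (1 - x ^ 2)) := by
      intro x; simp only [chS, chebU]; ring
    simp only [this]
    rw [intervalIntegral.integral_const_mul, chebU_orth, if_pos rfl]
    norm_num; ring
  | more n ih1 ih2 =>
    have key : ∀ x : ℝ, (chS (n+2) x) ^ 2 * Real.sqrt (1 - x ^ 2)
        = (4 * (chebU (n+1) x * chebU (n+1) x * Real.sqrt (1 - x ^ 2))
            - 4 * (chebU (n+1) x * chS n x * Real.sqrt (1 - x ^ 2)))
          + (chS n x) ^ 2 * Real.sqrt (1 - x ^ 2) := by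
      intro x; rw [chS_two]; ring
    simp only [key]
    have i1 : IntervalIntegrable
        (fun x : ℝ => 4 * (chebU (n+1) x * chebU (n+1) x * Real.sqrt (1 - x ^ 2)))
        volume (-1) 1 := by
      apply Continuous.intervalIntegrable
      exact continuous_const.mul (((chebU_cont _).mul (chebU_cont _)).mul sqrt_cont)
    have i2 : IntervalIntegrable
        (fun x : ℝ => 4 * (chebU (n+1) x * chS n x * Real.sqrt (1 - x ^ 2)))
        volume (-1) 1 := by
      apply Continuous.intervalIntegrable
      exact continuous_const.mul (((chebU_cont _).mul (chS_cont _)).mul sqrt_cont)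
    have i3 : IntervalIntegrable
        (fun x : ℝ => (chS n x) ^ 2 * Real.sqrt (1 - x ^ 2)) volume (-1) 1 := by
      apply Continuous.intervalIntegrable
      exact ((chS_cont _).pow 2).mul sqrt_cont
    rw [intervalIntegral.integral_add (i1.sub i2) i3,
      intervalIntegral.integral_sub i1 i2,
      intervalIntegral.integral_const_mul, intervalIntegral.integral_const_mul,
      chebU_orth, if_pos rfl, chS_orth n (n+1) (by omega), ih1]
    have : (n + 2) % 2 = n % 2 := by omega
    rw [this]
    push_cast
    ring

theorem chebyshevU_filter_integral (n : ℕ) (hn : 1 ≤ n) :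
    (Even n →
      ∫ x in (-1 : ℝ)..1, ((chebU n x - chebU n 0) / x) ^ 2 * Real.sqrt (1 - x ^ 2) = π * n) ∧
    (Odd n →
      ∫ x in (-1 : ℝ)..1, ((chebU n x - chebU n 0) / x) ^ 2 * Real.sqrt (1 - x ^ 2)
        = π * (n + 1)) := by
  have hmain : ∫ x in (-1 : ℝ)..1, ((chebU n x - chebU n 0) / x) ^ 2 * Real.sqrt (1 - x ^ 2)
      = π * ((n + n % 2 : ℕ) : ℝ) := by
    rw [← chS_sq_integral n]
    apply intervalIntegral.integral_congr_ae
    have h0 : (volume : Measure ℝ) {(0:ℝ)} = 0 := measure_singleton 0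
    filter_upwards [compl_mem_ae_iff.mpr h0] with x hx _
    have hx0 : x ≠ 0 := hx
    rw [chebU_sub, mul_comm x (chS n x), mul_div_assoc, div_self hx0, mul_one]
  constructor
  · intro he
    have h2 : n % 2 = 0 := Nat.even_iff.mp he
    rw [hmain, h2]
    norm_num
  · intro ho
    have h2 : n % 2 = 1 := Nat.odd_iff.mp ho
    rw [hmain, h2]
    push_cast
    ring
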